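/- arXiv:2504.03533 — 2 statements merged into one kernel-verified Lean document; each statement's English description precedes it below -/
import Mathlib

section
/- Let (X,T) be a topological dynamical system, let μ be an ergodic T-invariant Borel probability measure on X, and let n ∈ ℤ. If for μ-almost every x ∈ X the points x and T^n x are asymptotic (that is, dist(T^{-m}x, T^{-m}(T^n x)) → 0 as m → ∞), then T^n x = x for μ-almost every x ∈ X. -/
open Filter Topology MeasureTheory

namespace AsympSOE

/-! ### Subshift basics -/

/-- Shift of a bi-infinite sequence by `n` (the `n`-th power of the left shift `S`). -/
def SShift {A : Type*} (n : ℤ) (x : ℤ → A) : ℤ → A := fun i => x (i + n)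

/-- Two bi-infinite sequences are (left) asymptotic: they agree on a left half-line. -/
def SAsymp {A : Type*} (x y : ℤ → A) : Prop := ∃ ℓ : ℤ, ∀ i < ℓ, x i = y i

/-- `y` belongs to the shift-orbit of `x`. -/
def SSameOrbit {A : Type*} (x y : ℤ → A) : Prop := ∃ n : ℤ, SShift n x = y

/-- The shift-orbits of `x` and `y` are asymptotic. -/
def SOrbAsymp {A : Type*} (x y : ℤ → A) : Prop :=
  ∃ n n' : ℤ, SAsymp (SShift n x) (SShift n' y)

/-- `C` is an asymptotic component of the subshift `X`: it is the `SOrbAsymp`-class of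
some `x ∈ X` and contains at least two distinct orbits. -/
def SIsAsymComponent {A : Type*} (X : Set (ℤ → A)) (C : Set (ℤ → A)) : Prop :=
  ∃ x ∈ X, C = {y ∈ X | SOrbAsymp x y} ∧ ∃ y ∈ X, SOrbAsymp x y ∧ ¬ SSameOrbit x y

/-- A subshift: a nonempty closed shift-invariant set of bi-infinite sequences. -/
def IsSubshift {A : Type*} [TopologicalSpace A] (X : Set (ℤ → A)) : Prop :=
  X.Nonempty ∧ IsClosed X ∧ (∀ x ∈ X, SShift 1 x ∈ X) ∧ (∀ x ∈ X, SShift (-1) x ∈ X)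

/-- A minimal subshift: every orbit is dense. -/
def IsMinimalSubshift {A : Type*} [TopologicalSpace A] (X : Set (ℤ → A)) : Prop :=
  IsSubshift X ∧ ∀ x ∈ X, ∀ y ∈ X, y ∈ closure {z | SSameOrbit x z}

/-- The words of length `n` appearing in points of `X`. -/
def langOf {A : Type*} (X : Set (ℤ → A)) (n : ℕ) : Set (List A) :=
  {w | ∃ x ∈ X, ∃ a : ℤ, (List.range n).map (fun t => x (a + t)) = w}

/-- The complexity function of a subshift. -/
noncomputable def complexityOf {A : Type*} (X : Set (ℤ → A)) (n : ℕ) : ℕ :=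
  (langOf X n).ncard

/-- A Toeplitz sequence. -/
def IsToeplitzSeq {A : Type*} (x : ℤ → A) : Prop :=
  ∀ n : ℤ, ∃ p : ℕ, 0 < p ∧ ∀ k : ℤ, x (n + k * p) = x n

/-- A Toeplitz subshift: the shift-orbit closure of a Toeplitz sequence. -/
def IsToeplitzSubshift {A : Type*} [TopologicalSpace A] (X : Set (ℤ → A)) : Prop :=
  ∃ x : ℤ → A, IsToeplitzSeq x ∧ X = closure {z | SSameOrbit x z}

/-! ### General topological dynamical systems -/

/-- The (full) orbit of `x` under the invertible map `T`. -/
def orbitEq {X : Type*} (T : Equiv.Perm X) (x : X) : Set X := {y | ∃ n : ℤ, (T ^ n) x = y}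

/-- `x` and `y` are (left) asymptotic for `T`: `dist (T⁻ⁿ x) (T⁻ⁿ y) → 0` as `n → ∞`. -/
def MAsymp {X : Type*} [MetricSpace X] (T : Equiv.Perm X) (x y : X) : Prop :=
  Tendsto (fun n : ℕ => dist ((T ^ (-(n : ℤ))) x) ((T ^ (-(n : ℤ))) y)) atTop (𝓝 0)

/-- The orbits of `x` and `y` are asymptotic. -/
def MOrbAsymp {X : Type*} [MetricSpace X] (T : Equiv.Perm X) (x y : X) : Prop :=
  ∃ n n' : ℤ, MAsymp T ((T ^ n) x) ((T ^ n') y)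

/-- `C` is an asymptotic component of the system `(X, T)`: the `MOrbAsymp`-class of some
point `x`, containing at least two distinct orbits. -/
def MIsAsymComponent {X : Type*} [MetricSpace X] (T : Equiv.Perm X) (C : Set X) : Prop :=
  ∃ x, C = {y | MOrbAsymp T x y} ∧ ∃ y, MOrbAsymp T x y ∧ y ∉ orbitEq T x

/-- A minimal Cantor system: the compact metric space `X` is a Cantor space (nonempty,
totally disconnected, without isolated points) and every `T`-orbit is dense. -/
def IsMinimalCantor {X : Type*} [MetricSpace X] (T : X ≃ₜ X) : Prop :=
  CompactSpace X ∧ TotallyDisconnectedSpace X ∧ Nonempty X ∧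
    (∀ x : X, Filter.NeBot (𝓝[≠] x)) ∧ ∀ x : X, Dense (orbitEq T.toEquiv x)

/-- Strong orbit equivalence of the systems `(X, T)` and `(Y, S)`: an orbit equivalence
whose two orbit cocycles each have at most one point of discontinuity. -/
def IsSOE {X Y : Type*} [TopologicalSpace X] [TopologicalSpace Y]
    (T : X ≃ₜ X) (S : Y ≃ₜ Y) : Prop :=
  ∃ φ : X ≃ₜ Y,
    (∀ x : X, φ '' orbitEq T.toEquiv x = orbitEq S.toEquiv (φ x)) ∧
    ∃ α β : X → ℤ,
      (∀ x, φ (T x) = (S.toEquiv ^ α x) (φ x)) ∧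
      (∀ x, φ ((T.toEquiv ^ β x) x) = S (φ x)) ∧
      {x | ¬ContinuousAt α x}.Subsingleton ∧
      {x | ¬ContinuousAt β x}.Subsingleton

/-- The automorphism group of a system `(Y, S)`, as a subgroup of the permutation group:
the bi-continuous bijections commuting with `S`. -/
def autGroup {Y : Type*} [TopologicalSpace Y] (S : Y ≃ₜ Y) : Subgroup (Equiv.Perm Y) where
  carrier := {φ | Continuous φ ∧ Continuous φ.symm ∧ ∀ y, φ (S y) = S (φ y)}
  one_mem' := ⟨continuous_id, continuous_id, fun _ => rfl⟩
  mul_mem' := by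
    rintro a b ⟨ha1, ha2, ha3⟩ ⟨hb1, hb2, hb3⟩
    refine ⟨ha1.comp hb1, hb2.comp ha2, fun y => ?_⟩
    simp only [Equiv.Perm.mul_apply, hb3, ha3]
  inv_mem' := by
    rintro a ⟨ha1, ha2, ha3⟩
    refine ⟨by simpa using ha2, by rw [Equiv.Perm.inv_def, Equiv.symm_symm]; exact ha1, fun y => ?_⟩
    have h : a (S (a⁻¹ y)) = S y := by
      rw [ha3 (a⁻¹ y), Equiv.Perm.inv_def, Equiv.apply_symm_apply]
    calc a⁻¹ (S y) = a⁻¹ (a (S (a⁻¹ y))) := by rw [h]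
    _ = S (a⁻¹ y) := by rw [Equiv.Perm.inv_def, Equiv.symm_apply_apply]

/-! Poincaré recurrence for `T⁻¹`: the continuous function `d x = dist x (T^n x)` tends to `0`
along almost every backward orbit, because `T^n` commutes with `T⁻ᵐ`. Almost every point of
`{d ≥ ε}` returns to that set infinitely often under `T⁻¹`, so the set is null for every `ε > 0`. -/

theorem _root_.MeasureTheory.Conservative.ae_notMem_of_ae_eventually_notMem
    {α : Type*} [MeasurableSpace α] {μ : Measure α} {f : α → α} {s : Set α}
    (hf : Conservative f μ) (hs : NullMeasurableSet s μ)
    (h : ∀ᵐ x ∂μ, ∀ᶠ m in atTop, f^[m] x ∉ s) : ∀ᵐ x ∂μ, x ∉ s := by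
  filter_upwards [hf.ae_mem_imp_frequently_image_mem hs, h] with x hrecur hleave hxs
  obtain ⟨m, hmem, hnotMem⟩ := ((hrecur hxs).and_eventually hleave).exists
  exact hnotMem hmem

theorem _root_.MeasureTheory.Conservative.ae_eq_of_ae_tendsto_comp_iterate
    {α E : Type*} [MeasurableSpace α] [MetricSpace E] [MeasurableSpace E]
    [OpensMeasurableSpace E] {μ : Measure α} {f : α → α} {g : α → E} {c : E}
    (hf : Conservative f μ) (hg : Measurable g)
    (h : ∀ᵐ x ∂μ, Tendsto (fun m => g (f^[m] x)) atTop (𝓝 c)) : ∀ᵐ x ∂μ, g x = c := by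
  have hsmall : ∀ k : ℕ, ∀ᵐ x ∂μ, g x ∈ Metric.ball c (1 / (k + 1)) := by
    intro k
    have hball : IsOpen (Metric.ball c (1 / ((k : ℝ) + 1))) := Metric.isOpen_ball
    have hleave : ∀ᵐ x ∂μ, ∀ᶠ m in atTop, f^[m] x ∉ g ⁻¹' (Metric.ball c (1 / (k + 1)))ᶜ := by
      filter_upwards [h] with x hx
      simpa using hx.eventually (hball.mem_nhds (Metric.mem_ball_self (by positivity)))
    simpa using
      hf.ae_notMem_of_ae_eventually_notMem (hg hball.measurableSet.compl).nullMeasurableSet hleave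
  filter_upwards [ae_all_iff.2 hsmall] with x hx
  refine eq_of_forall_dist_le fun ε hε => ?_
  obtain ⟨k, hk⟩ := exists_nat_one_div_lt hε
  exact (Metric.mem_ball.1 (hx k)).le.trans hk.le

theorem _root_.Homeomorph.toEquiv_zpow {X : Type*} [TopologicalSpace X] (T : X ≃ₜ X) (n : ℤ) :
    (T ^ n).toEquiv = T.toEquiv ^ n :=
  map_zpow (⟨⟨Homeomorph.toEquiv, rfl⟩, fun _ _ => rfl⟩ : (X ≃ₜ X) →* Equiv.Perm X) T n

theorem mAsymp_self_zpow_iff {X : Type*} [MetricSpace X] (e : Equiv.Perm X) (n : ℤ) (x : X) :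
    MAsymp e x ((e ^ n) x) ↔
      Tendsto (fun m : ℕ => dist ((⇑e⁻¹)^[m] x) ((e ^ n) ((⇑e⁻¹)^[m] x))) atTop (𝓝 0) := by
  have hpow (m : ℕ) : ⇑(e ^ (-(m : ℤ))) = (⇑e⁻¹)^[m] := by
    rw [zpow_neg, zpow_natCast, ← inv_pow, Equiv.Perm.iterate_eq_pow]
  have hcomm (m : ℕ) : (e ^ (-(m : ℤ))) ((e ^ n) x) = (e ^ n) ((e ^ (-(m : ℤ))) x) := by
    rw [← Equiv.Perm.mul_apply, ← Equiv.Perm.mul_apply, ← zpow_add, ← zpow_add, add_comm]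
  simp only [MAsymp, hcomm, hpow]

theorem ae_fixed_of_ae_asymptotic_iterate_general
    {X : Type*} [MetricSpace X] [MeasurableSpace X] [BorelSpace X]
    (T : X ≃ₜ X) (μ : Measure X) [IsProbabilityMeasure μ]
    (hErg : Ergodic (T : X → X) μ) (n : ℤ)
    (hAs : ∀ᵐ x ∂μ, MAsymp T.toEquiv x ((T.toEquiv ^ n) x)) :
    ∀ᵐ x ∂μ, (T.toEquiv ^ n) x = x := by
  have hcons : Conservative T.symm μ :=
    (hErg.toMeasurePreserving.symm T.toMeasurableEquiv).conservative
  have hmeas : Measurable fun x => dist x ((T.toEquiv ^ n) x) := by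
    rw [← T.toEquiv_zpow]
    exact (continuous_id.dist (T ^ n).continuous).measurable
  filter_upwards [hcons.ae_eq_of_ae_tendsto_comp_iterate hmeas
    (hAs.mono fun x hx => (mAsymp_self_zpow_iff T.toEquiv n x).1 hx)] with x hx
  exact (dist_eq_zero.1 hx).symm

/-- If `μ` is an ergodic invariant measure and `x ∼ T^n x` almost surely,
then `T^n x = x` almost surely. -/
theorem ae_fixed_of_ae_asymptotic_iterate
    {X : Type*} [MetricSpace X] [CompactSpace X] [MeasurableSpace X] [BorelSpace X]
    (T : X ≃ₜ X) (μ : Measure X) [IsProbabilityMeasure μ]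
    (hErg : Ergodic (T : X → X) μ) (n : ℤ)
    (hAs : ∀ᵐ x ∂μ, MAsymp T.toEquiv x ((T.toEquiv ^ n) x)) :
    ∀ᵐ x ∂μ, (T.toEquiv ^ n) x = x :=
  ae_fixed_of_ae_asymptotic_iterate_general T μ hErg n hAs

end AsympSOE
end

section
/- Let k ≥ 1, let τ = (τ_n : V_{n+1}* → V_n*)_{n≥0} be a directive sequence of morphisms satisfying Property (P_k) with V_n = {v_{1,n},…,v_{m_n,n}} for n ≥ 1, and fix n ≥ 1. If the letter v_{i,n} ∈ V_n is a signal for some x ∈ X_τ^{(n)}, then 1 ≤ i ≤ k. Moreover, if x, y ∈ X_τ^{(n)} form a nontrivial asymptotic pair with J(x,y) = (v_{i,n}, ℓ), then {x_ℓ, y_ℓ} = {v_{i,n}, v_{i+1,n}}. -/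
open Filter Topology MeasureTheory

namespace AsympSOE

/-! ### S-adic subshifts and Property (P_k) -/

/-- The word `x_a x_{a+1} … x_{a+len-1}` read in the bi-infinite sequence `x`. -/
def factorWord {A : Type*} (x : ℤ → A) (a : ℤ) (len : ℕ) : List A :=
  (List.range len).map fun t => x (a + t)

/-- `tauIter τ n d a = (τ_n ∘ τ_{n+1} ∘ … ∘ τ_{n+d-1}) (a)`: the image of the letter `a`
of level `n + d` under the composition of the directive sequence down to level `n`.
In particular `tauIter τ 0 n` is `τ_{[0,n)}`. -/
def tauIter (τ : ℕ → ℕ → List ℕ) (n : ℕ) : ℕ → ℕ → List ℕ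
  | 0, a => [a]
  | d + 1, a => (τ (n + d) a).flatMap (tauIter τ n d)

/-- The S-adic subshift generated by the directive sequence `τ` at level `n`
(the level-`n` alphabet consists of the naturals `< m n`). -/
def SAdicLevel (m : ℕ → ℕ) (τ : ℕ → ℕ → List ℕ) (n : ℕ) : Set (ℤ → ℕ) :=
  {x | (∀ i, x i < m n) ∧
    ∀ (a : ℤ) (len : ℕ), ∃ N c, n < N ∧ c < m N ∧
      factorWord x a len <:+: tauIter τ n (N - n) c}

/-- The prescribed prefix `v_1² v_2² … v_{a}² v_{a+1} … v_{k+1}` in `0`-based letters: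
letters `0, …, a-1` doubled, followed by the letters `a, …, k`. -/
def pkPrefix (k a : ℕ) : List ℕ :=
  (List.range a).flatMap (fun j => [j, j]) ++ (List.range (k + 1 - a)).map (fun j => a + j)

/-- Property `(P_k)` for a directive sequence `τ` with alphabet sizes `m`: `τ₀` is a
(non-erasing) hat morphism and, for every `n ≥ 1`, `τ_n` is primitive, has the prescribed
prefixes, ends with the last letter of the level-`n` alphabet, and no image contains the
word (last letter)(first letter).  Level-`n` letters are `0, 1, …, m n - 1`, so the
letter `v_{i,n}` of the paper is `i - 1`. -/
def PropertyPk (k : ℕ) (m : ℕ → ℕ) (τ : ℕ → ℕ → List ℕ) : Prop :=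
  (∀ n, 1 ≤ n → k < m n) ∧
  (∀ n a, a < m (n + 1) → τ n a ≠ [] ∧ ∀ c ∈ τ n a, c < m n) ∧
  (∀ a b, a < m 1 → b < m 1 → a ≠ b → ∀ c, c ∈ τ 0 a → c ∉ τ 0 b) ∧
  (∀ n, 1 ≤ n → ∀ a, a < m (n + 1) → ∀ b, b < m n → b ∈ τ n a) ∧
  (∀ n, 1 ≤ n → ∀ a, a ≤ k → pkPrefix k a <+: τ n a) ∧
  (∀ n, 1 ≤ n → ∀ a, k < a → a < m (n + 1) → (List.replicate (a + 1) 0 ++ [1]) <+: τ n a) ∧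
  (∀ n, 1 ≤ n → ∀ a, a < m (n + 1) →
    ([m n - 1] <:+ τ n a ∧ ¬ ([m n - 1, 0] <:+: τ n a)))

/-- Property `(P_∞)`: as `(P_k)` but with `k` replaced by `n` at level `n`. -/
def PropertyPinf (m : ℕ → ℕ) (τ : ℕ → ℕ → List ℕ) : Prop :=
  (∀ n, 1 ≤ n → n < m n) ∧
  (∀ n a, a < m (n + 1) → τ n a ≠ [] ∧ ∀ c ∈ τ n a, c < m n) ∧
  (∀ a b, a < m 1 → b < m 1 → a ≠ b → ∀ c, c ∈ τ 0 a → c ∉ τ 0 b) ∧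
  (∀ n, 1 ≤ n → ∀ a, a < m (n + 1) → ∀ b, b < m n → b ∈ τ n a) ∧
  (∀ n, 1 ≤ n → ∀ a, a ≤ n → pkPrefix n a <+: τ n a) ∧
  (∀ n, 1 ≤ n → ∀ a, n < a → a < m (n + 1) → (List.replicate (a + 1) 0 ++ [1]) <+: τ n a) ∧
  (∀ n, 1 ≤ n → ∀ a, a < m (n + 1) →
    ([m n - 1] <:+ τ n a ∧ ¬ ([m n - 1, 0] <:+: τ n a)))

/-- The (integer) position in the concatenation `σ(y)` at which the block `σ(y_j)` starts,
the block `σ(y_0)` starting at position `0`. -/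
def cumLen (σ : ℕ → List ℕ) (y : ℤ → ℕ) (j : ℤ) : ℤ :=
  if 0 ≤ j then ((List.range j.toNat).map fun t => ((σ (y t)).length : ℤ)).sum
  else -(((List.range (-j).toNat).map fun t => ((σ (y (j + t))).length : ℤ)).sum)

/-- `x = S^r (σ(y))`, where `σ(y) = … σ(y_{-1}).σ(y_0) σ(y_1) …` is the concatenated image
of the bi-infinite sequence `y` (block `σ(y_0)` starting at coordinate `0`): for every `j`,
the word `σ(y_j)` is read in `x` starting at position `cumLen σ y j - r`. -/
def IsShiftedImage (σ : ℕ → List ℕ) (y : ℤ → ℕ) (r : ℤ) (x : ℤ → ℕ) : Prop :=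
  ∀ j : ℤ, factorWord x (cumLen σ y j - r) (σ (y j)).length = σ (y j)

/-!
Write `M = m n - 1` for the last letter of level `n`. Under `(P_k)` every block `τ_n(b)` starts
with `0`, ends with `M` and avoids the word `M 0`, so in a concatenation of blocks the occurrences
of `M 0` are exactly the block boundaries. Every factor of a point of level `n` lies in such a
concatenation and blocks have bounded length, so boundaries occur before the bifurcation point
`ℓ`; let `p` be the last one. Then `x_p … x_ℓ` is a prefix of `τ_n(a) 0` and `y_p … y_ℓ` one of
`τ_n(b) 0`, with `a ≠ b`. Both blocks begin with their prescribed prefixes, and two distinct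
prescribed prefixes part at a letter `v < k`, one continuing with `v` and the other with `v + 1`.
Two words part at most once, so this is where `x` and `y` part.
-/

end AsympSOE

namespace List

variable {α : Type*}

theorem eq_of_prefix_of_length_eq {l₁ l₂ l : List α} (h₁ : l₁ <+: l) (h₂ : l₂ <+: l)
    (hlen : l₁.length = l₂.length) : l₁ = l₂ := by
  rw [prefix_iff_eq_take.1 h₁, prefix_iff_eq_take.1 h₂, hlen]

theorem singleton_prefix_of_prefix {f : α} {l₁ l₂ : List α} (hf : [f] <+: l₂) (h : l₁ <+: l₂)
    (hne : l₁ ≠ []) : [f] <+: l₁ :=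
  prefix_of_prefix_length_le hf h (length_pos_iff.2 hne)

theorem singleton_suffix_of_suffix {M : α} {l₁ l₂ : List α} (hM : [M] <:+ l₂) (h : l₁ <:+ l₂)
    (hne : l₁ ≠ []) : [M] <:+ l₁ :=
  suffix_of_suffix_length_le hM h (length_pos_iff.2 hne)

theorem pair_infix_append {M f : α} {l₁ l₂ : List α} (h₁ : [M] <:+ l₁) (h₂ : [f] <+: l₂) :
    [M, f] <:+: l₁ ++ l₂ := by
  obtain ⟨s, rfl⟩ := h₁
  obtain ⟨t, rfl⟩ := h₂
  exact ⟨s, t, by simp⟩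

theorem length_le_of_prefix_fork {X Y p q : List α} {c d : α} (hpX : p ++ [c] <+: X)
    (hpY : p ++ [d] <+: Y) (hcd : c ≠ d) (hqX : q <+: X) (hqY : q <+: Y) :
    q.length ≤ p.length := by
  by_contra! hlt
  have hlen : (p ++ [c]).length ≤ q.length := by simpa using hlt
  have hcq : p ++ [c] <+: q := prefix_of_prefix_length_le hpX hqX hlen
  have hdq : p ++ [d] <+: q := prefix_of_prefix_length_le hpY hqY (by simpa using hlen)
  exact hcd (by simpa using eq_of_prefix_of_length_eq hcq hdq (by simp))

theorem eq_of_prefix_fork {X Y p q : List α} {c d e g : α}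
    (hpX : p ++ [c] <+: X) (hpY : p ++ [d] <+: Y) (hcd : c ≠ d)
    (hqX : q ++ [e] <+: X) (hqY : q ++ [g] <+: Y) (heg : e ≠ g) :
    p = q ∧ c = e ∧ d = g := by
  have hp : p <+: X := (prefix_append _ _).trans hpX
  have hq : q <+: X := (prefix_append _ _).trans hqX
  have hlen : p.length = q.length := le_antisymm
    (length_le_of_prefix_fork hqX hqY heg hp ((prefix_append _ _).trans hpY))
    (length_le_of_prefix_fork hpX hpY hcd hq ((prefix_append _ _).trans hqY))
  obtain rfl : p = q := eq_of_prefix_of_length_eq hp hq hlen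
  have hce := eq_of_prefix_of_length_eq hpX hqX (by simp)
  have hdg := eq_of_prefix_of_length_eq hpY hqY (by simp)
  simp_all

end List

namespace AsympSOE

open List

section Framed

variable {α β : Type*} {σ : β → List α} {f M : α} {ws : List β} {w z : List α}

def IsFramed (f M : α) (w : List α) : Prop := [f] <+: w ∧ [M] <:+ w ∧ ¬ [M, f] <:+: w

theorem singleton_prefix_of_prefix_flatMap (hσ : ∀ b ∈ ws, [f] <+: σ b)
    (hw : w <+: ws.flatMap σ) (hw0 : w ≠ []) : [f] <+: w := by
  rcases ws with _ | ⟨b, ws⟩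
  · exact absurd (prefix_nil.1 hw) hw0
  · rw [flatMap_cons] at hw
    exact singleton_prefix_of_prefix ((hσ b mem_cons_self).trans (prefix_append _ _)) hw hw0

theorem exists_infix_of_infix_flatMap (hσ : ∀ b ∈ ws, IsFramed f M (σ b))
    (hw : w <:+: ws.flatMap σ) (hw0 : w ≠ []) (hMf : ¬ [M, f] <:+: w) :
    ∃ b ∈ ws, w <:+: σ b := by
  induction ws with
  | nil => exact absurd (eq_nil_of_infix_nil hw) hw0
  | cons b ws ih =>
    rw [flatMap_cons, infix_append_iff_ne_nil] at hw
    rcases hw with hb | hws | ⟨l₁, l₂, hl₁, hl₂, rfl, h₁, h₂⟩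
    · exact ⟨b, mem_cons_self, hb⟩
    · obtain ⟨c, hc, hwc⟩ := ih (fun c hc => hσ c (mem_cons_of_mem _ hc)) hws
      exact ⟨c, mem_cons_of_mem _ hc, hwc⟩
    · refine absurd (pair_infix_append ?_ ?_) hMf
      · exact singleton_suffix_of_suffix (hσ b mem_cons_self).2.1 h₁ hl₁
      · exact singleton_prefix_of_prefix_flatMap
          (fun c hc => (hσ c (mem_cons_of_mem _ hc)).1) h₂ hl₂

theorem exists_suffix_prefix_flatMap_of_cons_infix (hσ : ∀ b ∈ ws, IsFramed f M (σ b))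
    (h : M :: w <:+: ws.flatMap σ) (hw : [f] <+: w) : ∃ ws', ws' <:+ ws ∧ w <+: ws'.flatMap σ := by
  induction ws with
  | nil => simp at h
  | cons b ws ih =>
    have hb : ¬ [M, f] <:+: σ b := (hσ b mem_cons_self).2.2
    rw [flatMap_cons, infix_append_iff_ne_nil] at h
    rcases h with h | h | ⟨_ | ⟨c, l₁⟩, l₂, hl₁, -, hl, h₁, h₂⟩
    · exact absurd ((cons_prefix_cons.2 ⟨rfl, hw⟩).isInfix.trans h) hb
    · obtain ⟨ws', hws', hw'⟩ := ih (fun c hc => hσ c (mem_cons_of_mem _ hc)) h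
      exact ⟨ws', hws'.trans (suffix_cons _ _), hw'⟩
    · exact absurd rfl hl₁
    · obtain ⟨rfl, rfl⟩ := cons.inj hl
      rcases eq_or_ne l₁ [] with rfl | hl₁'
      · exact ⟨ws, suffix_cons _ _, h₂⟩
      · have hf := singleton_prefix_of_prefix hw (prefix_append _ _) hl₁'
        exact absurd ((cons_prefix_cons.2 ⟨rfl, hf⟩).isInfix.trans h₁.isInfix) hb

theorem exists_prefix_append_of_prefix_flatMap {c : α} (hσ : ∀ b ∈ ws, IsFramed f M (σ b))
    (h : z ++ [c] <+: ws.flatMap σ) (hz : ¬ [M, f] <:+: z) :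
    ∃ b ∈ ws, z ++ [c] <+: σ b ++ [f] := by
  rcases ws with _ | ⟨b, ws⟩
  · simp at h
  rw [flatMap_cons] at h
  refine ⟨b, mem_cons_self, ?_⟩
  rcases prefix_or_prefix_of_prefix h (prefix_append (σ b) _) with hb | ⟨r, hr⟩
  · exact hb.trans (prefix_append _ _)
  have hrws : r <+: ws.flatMap σ := by
    rwa [← hr, prefix_append_right_inj] at h
  rcases eq_nil_or_concat' r with rfl | ⟨r, c', rfl⟩
  · rw [append_nil] at hr
    exact hr ▸ prefix_append _ _
  rw [← append_assoc] at hr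
  obtain ⟨rfl, hc⟩ := append_inj' hr rfl
  have hfr := singleton_prefix_of_prefix_flatMap (fun c hc => (hσ c (mem_cons_of_mem _ hc)).1)
    hrws (by simp)
  rcases eq_or_ne r [] with rfl | hr0
  · simp_all
  · exact absurd (pair_infix_append (hσ b mem_cons_self).2.1
      (singleton_prefix_of_prefix hfr (prefix_append _ _) hr0)) hz

theorem exists_prefix_append_of_cons_infix_flatMap {c : α} (hσ : ∀ b ∈ ws, IsFramed f M (σ b))
    (h : M :: (z ++ [c]) <:+: ws.flatMap σ) (hz : [f] <+: z) (hzMf : ¬ [M, f] <:+: z) :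
    ∃ b ∈ ws, z ++ [c] <+: σ b ++ [f] := by
  obtain ⟨ws', hws', h'⟩ :=
    exists_suffix_prefix_flatMap_of_cons_infix hσ h (hz.trans (prefix_append _ _))
  obtain ⟨b, hb, hzb⟩ :=
    exists_prefix_append_of_prefix_flatMap (fun b hb => hσ b (hws'.subset hb)) h' hzMf
  exact ⟨b, hws'.subset hb, hzb⟩

end Framed

section FactorWord

variable {A : Type*} (x : ℤ → A)

theorem factorWord_eq_map_range (a : ℤ) (len : ℕ) :
    factorWord x a len = (range len).map fun t : ℕ => x (a + t) := by
  simp only [factorWord, bind_pure_comp, map_eq_map, List.map_map]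
  rfl

theorem factorWord_length (a : ℤ) (len : ℕ) : (factorWord x a len).length = len := by
  simp [factorWord_eq_map_range]

theorem factorWord_add (a : ℤ) (s t : ℕ) :
    factorWord x a (s + t) = factorWord x a s ++ factorWord x (a + s) t := by
  simp only [factorWord_eq_map_range, range_add, map_append, List.map_map]
  congr 1
  refine map_congr_left fun i _ => ?_
  simp [add_assoc]

theorem factorWord_one (a : ℤ) : factorWord x a 1 = [x a] := by
  simp [factorWord_eq_map_range]

theorem factorWord_succ (a : ℤ) (len : ℕ) :
    factorWord x a (len + 1) = x a :: factorWord x (a + 1) len := by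
  rw [add_comm, factorWord_add, factorWord_one]
  simp

theorem factorWord_succ_right (a : ℤ) (len : ℕ) :
    factorWord x a (len + 1) = factorWord x a len ++ [x (a + len)] := by
  rw [factorWord_add, factorWord_one]

theorem factorWord_sub_one (a : ℤ) (len : ℕ) :
    factorWord x (a - 1) (len + 2) = x (a - 1) :: (factorWord x a len ++ [x (a + len)]) := by
  rw [factorWord_succ, sub_add_cancel, factorWord_succ_right]

theorem factorWord_congr {y : ℤ → A} {a : ℤ} {len : ℕ}
    (h : ∀ i, a ≤ i → i < a + len → x i = y i) : factorWord x a len = factorWord y a len := by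
  simp only [factorWord_eq_map_range]
  exact map_congr_left fun i hi => h _ (by omega) (by simp at hi; omega)

theorem exists_eq_factorWord_of_infix {w : List A} {a : ℤ} {len : ℕ}
    (h : w <:+: factorWord x a len) :
    ∃ s : ℕ, s + w.length ≤ len ∧ factorWord x (a + s) w.length = w := by
  obtain ⟨u, v, huv⟩ := h
  have hlen : u.length + w.length + v.length = len := by
    simpa [factorWord_length, add_assoc] using congrArg length huv
  rw [← hlen, factorWord_add, factorWord_add] at huv
  obtain ⟨hu, -⟩ := append_inj huv.symm (by simp [factorWord_length])
  exact ⟨u.length, by omega, (append_inj hu (by simp [factorWord_length])).2⟩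

theorem exists_of_pair_infix_factorWord {u v : A} {a : ℤ} {len : ℕ}
    (h : [u, v] <:+: factorWord x a len) :
    ∃ q, a < q ∧ q < a + len ∧ x (q - 1) = u ∧ x q = v := by
  obtain ⟨s, hs, hw⟩ := exists_eq_factorWord_of_infix x h
  rw [length_cons, length_singleton, factorWord_succ, factorWord_one] at hw
  simp only [cons.injEq, and_true] at hw
  refine ⟨a + s + 1, by omega, by simp at hs; omega, by simpa using hw.1, hw.2⟩

end FactorWord

section SAdic

variable {m : ℕ → ℕ} {τ : ℕ → ℕ → List ℕ}

theorem tauIter_succ (n d c : ℕ) :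
    tauIter τ n (d + 1) c = (tauIter τ (n + 1) d c).flatMap (τ n) := by
  induction d generalizing c with
  | zero => simp [tauIter]
  | succ d ih =>
    rw [tauIter, tauIter, flatMap_assoc, show n + 1 + d = n + (d + 1) by omega]
    exact congrArg (fun g => flatMap g _) (funext ih)

theorem lt_of_mem_tauIter (hτ : ∀ n a, a < m (n + 1) → ∀ c ∈ τ n a, c < m n) {N d c : ℕ}
    (hc : c < m (N + d)) {b : ℕ} (hb : b ∈ tauIter τ N d c) : b < m N := by
  induction d generalizing c with
  | zero => simp_all [tauIter]
  | succ d ih =>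
    obtain ⟨a, ha, hba⟩ := mem_flatMap.1 hb
    exact ih (hτ (N + d) c hc a ha) hba

theorem exists_infix_flatMap_of_mem_SAdicLevel
    (hτ : ∀ n a, a < m (n + 1) → ∀ c ∈ τ n a, c < m n) {n : ℕ} {x : ℤ → ℕ}
    (hx : x ∈ SAdicLevel m τ n) (a : ℤ) (len : ℕ) :
    ∃ ws : List ℕ, (∀ b ∈ ws, b < m (n + 1)) ∧ factorWord x a len <:+: ws.flatMap (τ n) := by
  obtain ⟨N, c, hN, hc, hw⟩ := hx.2 a len
  obtain ⟨d, hd⟩ : ∃ d, N - n = d + 1 := ⟨N - n - 1, by omega⟩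
  rw [hd, tauIter_succ] at hw
  exact ⟨_, fun b hb => lt_of_mem_tauIter hτ (by rwa [show n + 1 + d = N by omega]) hb, hw⟩

end SAdic

section Prescribed

def doubledRange (a : ℕ) : List ℕ := (range a).flatMap fun j => [j, j]

/-- The prefix that `(P_k)` prescribes for `τ_n(v_{a+1,n+1})`. -/
def prescribedPrefix (k a : ℕ) : List ℕ :=
  if a ≤ k then pkPrefix k a else replicate (a + 1) 0 ++ [1]

theorem doubledRange_succ (a : ℕ) : doubledRange (a + 1) = doubledRange a ++ [a, a] := by
  simp [doubledRange, range_succ]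

theorem doubledRange_prefix_doubledRange {a b : ℕ} (h : a ≤ b) :
    doubledRange a <+: doubledRange b := by
  obtain ⟨c, rfl⟩ := Nat.exists_eq_add_of_le h
  simp [doubledRange, range_add]

theorem doubledRange_append_prefix_pkPrefix {k a : ℕ} (h : a < k) :
    doubledRange a ++ [a, a + 1] <+: pkPrefix k a := by
  obtain ⟨c, hc⟩ : ∃ c, k + 1 - a = c + 2 := ⟨k - a - 1, by omega⟩
  simp [pkPrefix, doubledRange, hc, range_succ_eq_map]

theorem doubledRange_append_prefix_pkPrefix_of_le {k a : ℕ} (h : a ≤ k) :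
    doubledRange a ++ [a] <+: pkPrefix k a := by
  obtain ⟨c, hc⟩ : ∃ c, k + 1 - a = c + 1 := ⟨k - a, by omega⟩
  simp [pkPrefix, doubledRange, hc, range_succ_eq_map]

theorem replicate_prefix_replicate_append {α : Type*} (x : α) {i j : ℕ} (h : i ≤ j)
    (l : List α) : replicate i x <+: replicate j x ++ l := by
  obtain ⟨d, rfl⟩ := Nat.exists_eq_add_of_le h
  rw [replicate_add, append_assoc]
  exact prefix_append _ _

theorem singleton_zero_prefix_prescribedPrefix (k a : ℕ) : [0] <+: prescribedPrefix k a := by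
  unfold prescribedPrefix
  split_ifs with h
  · rcases a with _ | a
    · simpa [doubledRange] using (doubledRange_append_prefix_pkPrefix_of_le h)
    · exact (prefix_append _ _).trans <|
        (doubledRange_prefix_doubledRange (by omega : 1 ≤ a + 1)).trans <|
        (prefix_append _ _).trans (doubledRange_append_prefix_pkPrefix_of_le h)
  · exact replicate_prefix_replicate_append 0 (by omega : 1 ≤ a + 1) _

theorem exists_fork_prescribedPrefix {k a b : ℕ} (hk : 1 ≤ k) (hab : a < b) :
    ∃ u, ∃ v < k, u ++ [v, v + 1] <+: prescribedPrefix k a ∧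
      u ++ [v, v] <+: prescribedPrefix k b := by
  -- The prefixes part after `doubledRange a` if `b ≤ k` or `a = 0`, after `[0]` if
  -- `0 < a ≤ k < b`, and after `replicate a 0` if `k < a`.
  by_cases hbk : b ≤ k
  · refine ⟨doubledRange a, a, by omega, ?_, ?_⟩
    · rw [prescribedPrefix, if_pos (by omega)]
      exact doubledRange_append_prefix_pkPrefix (by omega)
    · rw [prescribedPrefix, if_pos hbk, ← doubledRange_succ]
      exact (doubledRange_prefix_doubledRange hab).trans (prefix_append _ _)
  have hb : prescribedPrefix k b = replicate (b + 1) 0 ++ [1] := if_neg hbk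
  by_cases hak : a ≤ k
  · rw [prescribedPrefix, if_pos hak, hb]
    rcases Nat.eq_zero_or_pos a with rfl | ha
    · refine ⟨[], 0, hk, by simpa [doubledRange] using doubledRange_append_prefix_pkPrefix hk, ?_⟩
      exact replicate_prefix_replicate_append 0 (by omega : 2 ≤ b + 1) _
    · refine ⟨[0], 0, hk, ?_, replicate_prefix_replicate_append 0 (by omega : 3 ≤ b + 1) _⟩
      rcases Nat.lt_or_ge a 2 with ha2 | ha2
      · obtain rfl : a = 1 := by omega
        simpa [doubledRange] using doubledRange_append_prefix_pkPrefix_of_le hak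
      · refine (?_ : [0, 0, 1] <+: doubledRange 2).trans <|
          (doubledRange_prefix_doubledRange ha2).trans <|
          (prefix_append _ _).trans (doubledRange_append_prefix_pkPrefix_of_le hak)
        simp [doubledRange, range_succ]
  · refine ⟨replicate a 0, 0, hk, ?_, ?_⟩
    · rw [prescribedPrefix, if_neg hak]
      simp [replicate_succ']
    · rw [hb, show replicate a 0 ++ [0, 0] = replicate (a + 2) 0 by simp [replicate_add]]
      exact replicate_prefix_replicate_append 0 (by omega) _

end Prescribed

theorem exists_eq_append_of_prefix_prescribedPrefix {k a b : ℕ} (hk : 1 ≤ k) (hab : a ≠ b)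
    {X Y z : List ℕ} {c d : ℕ} (hX : prescribedPrefix k a <+: X)
    (hY : prescribedPrefix k b <+: Y) (hc : z ++ [c] <+: X) (hd : z ++ [d] <+: Y)
    (hcd : c ≠ d) :
    ∃ u, ∃ v < k, z = u ++ [v] ∧ ((c = v ∧ d = v + 1) ∨ (c = v + 1 ∧ d = v)) := by
  wlog hlt : a < b generalizing a b X Y c d
  · obtain ⟨u, v, hvk, hz, hv⟩ :=
      this hab.symm hY hX hd hc hcd.symm (lt_of_le_of_ne (not_lt.1 hlt) hab.symm)
    exact ⟨u, v, hvk, hz, hv.symm.imp (fun h => h.symm) (fun h => h.symm)⟩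
  obtain ⟨u, v, hvk, hua, hub⟩ := exists_fork_prescribedPrefix hk hlt
  obtain ⟨hz, hc, hd⟩ := eq_of_prefix_fork (q := u ++ [v]) hc hd hcd
    (by simpa using hua.trans hX) (by simpa using hub.trans hY) (Nat.succ_ne_self v)
  exact ⟨u, v, hvk, hz, Or.inr ⟨hc, hd⟩⟩

namespace PropertyPk

variable {k : ℕ} {m : ℕ → ℕ} {τ : ℕ → ℕ → List ℕ} {n : ℕ} {x : ℤ → ℕ}

theorem lt_of_mem_tau (hP : PropertyPk k m τ) : ∀ n a, a < m (n + 1) → ∀ c ∈ τ n a, c < m n :=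
  fun n a ha => (hP.2.1 n a ha).2

theorem prescribedPrefix_prefix (hP : PropertyPk k m τ) (hn : 1 ≤ n) {a : ℕ}
    (ha : a < m (n + 1)) : prescribedPrefix k a <+: τ n a := by
  unfold prescribedPrefix
  split_ifs with hak
  · exact hP.2.2.2.2.1 n hn a hak
  · exact hP.2.2.2.2.2.1 n hn a (by omega) ha

theorem isFramed (hP : PropertyPk k m τ) (hn : 1 ≤ n) {a : ℕ} (ha : a < m (n + 1)) :
    IsFramed 0 (m n - 1) (τ n a) :=
  ⟨(singleton_zero_prefix_prescribedPrefix k a).trans (hP.prescribedPrefix_prefix hn ha),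
    hP.2.2.2.2.2.2 n hn a ha⟩

theorem exists_marker_lt (hP : PropertyPk k m τ) (hn : 1 ≤ n) (hx : x ∈ SAdicLevel m τ n)
    (ℓ : ℤ) : ∃ q < ℓ, x (q - 1) = m n - 1 ∧ x q = 0 := by
  set B := (Finset.range (m (n + 1))).sup fun b => (τ n b).length
  obtain ⟨ws, hws, hw⟩ :=
    exists_infix_flatMap_of_mem_SAdicLevel hP.lt_of_mem_tau hx (ℓ - (B + 1)) (B + 1)
  have hMf : [m n - 1, 0] <:+: factorWord x (ℓ - (B + 1)) (B + 1) := by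
    by_contra hMf
    obtain ⟨b, hb, hwb⟩ := exists_infix_of_infix_flatMap (fun b hb => hP.isFramed hn (hws b hb))
      hw (ne_nil_of_length_pos (by simp [factorWord_length])) hMf
    have hlen := hwb.length_le
    have hB := Finset.le_sup (f := fun b => (τ n b).length) (Finset.mem_range.2 (hws b hb))
    simp only [factorWord_length] at hlen
    omega
  obtain ⟨q, -, hq, hq'⟩ := exists_of_pair_infix_factorWord x hMf
  exact ⟨q, by omega, hq'⟩

theorem exists_marker_window (hP : PropertyPk k m τ) (hn : 1 ≤ n) (hx : x ∈ SAdicLevel m τ n)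
    (ℓ : ℤ) : ∃ (p : ℤ) (t : ℕ), p + (t + 1 : ℕ) = ℓ ∧ x (p - 1) = m n - 1 ∧
      [0] <+: factorWord x p (t + 1) ∧ ¬ [m n - 1, 0] <:+: factorWord x p (t + 1) := by
  obtain ⟨p, ⟨hpℓ, hpM, hp0⟩, hpmax⟩ := Int.exists_greatest_of_bdd
    (P := fun q => q < ℓ ∧ x (q - 1) = m n - 1 ∧ x q = 0) ⟨ℓ, fun q hq => hq.1.le⟩
    (hP.exists_marker_lt hn hx ℓ)
  obtain ⟨t, hℓ⟩ : ∃ t : ℕ, p + (t + 1 : ℕ) = ℓ := ⟨(ℓ - p - 1).toNat, by omega⟩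
  refine ⟨p, t, hℓ, hpM, by simp [factorWord_succ, hp0], fun h => ?_⟩
  obtain ⟨q, hpq, hqℓ, hq⟩ := exists_of_pair_infix_factorWord x h
  have := hpmax q ⟨by omega, hq⟩
  omega

theorem exists_prefix_tau_append (hP : PropertyPk k m τ) (hn : 1 ≤ n)
    (hx : x ∈ SAdicLevel m τ n) {p : ℤ} {len : ℕ} (hpM : x (p - 1) = m n - 1)
    (hz : [0] <+: factorWord x p len) (hzM : ¬ [m n - 1, 0] <:+: factorWord x p len) :
    ∃ b < m (n + 1), factorWord x p len ++ [x (p + len)] <+: τ n b ++ [0] := by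
  obtain ⟨ws, hws, hw⟩ :=
    exists_infix_flatMap_of_mem_SAdicLevel hP.lt_of_mem_tau hx (p - 1) (len + 2)
  rw [factorWord_sub_one, hpM] at hw
  obtain ⟨b, hb, hzb⟩ := exists_prefix_append_of_cons_infix_flatMap
    (fun b hb => hP.isFramed hn (hws b hb)) hw hz hzM
  exact ⟨b, hws b hb, hzb⟩

theorem exists_eq_append_of_fork (hP : PropertyPk k m τ) (hk : 1 ≤ k) (hn : 1 ≤ n)
    {a b : ℕ} (ha : a < m (n + 1)) (hb : b < m (n + 1)) {z : List ℕ} {c d : ℕ}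
    (hc : z ++ [c] <+: τ n a ++ [0]) (hd : z ++ [d] <+: τ n b ++ [0]) (hcd : c ≠ d) :
    ∃ u, ∃ v < k, z = u ++ [v] ∧ ((c = v ∧ d = v + 1) ∨ (c = v + 1 ∧ d = v)) := by
  have hab : a ≠ b := by
    rintro rfl
    exact hcd (by simpa using eq_of_prefix_of_length_eq hc hd (by simp))
  exact exists_eq_append_of_prefix_prescribedPrefix hk hab
    ((hP.prescribedPrefix_prefix hn ha).trans (prefix_append _ _))
    ((hP.prescribedPrefix_prefix hn hb).trans (prefix_append _ _)) hc hd hcd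

end PropertyPk

/-- Under Property `(P_k)`, a bifurcation signal at level `n ≥ 1` is one
of the letters `v_{1,n}, …, v_{k,n}`, and at the bifurcation point the two sequences read
`v_{i,n}` and `v_{i+1,n}`.  (Letters are `0`-based: `v_{i,n}` is `i - 1`.) -/
theorem signal_lt_k_of_propertyPk
    (k : ℕ) (hk : 1 ≤ k) (m : ℕ → ℕ) (τ : ℕ → ℕ → List ℕ) (hP : PropertyPk k m τ)
    (n : ℕ) (hn : 1 ≤ n) (x y : ℤ → ℕ)
    (hx : x ∈ SAdicLevel m τ n) (hy : y ∈ SAdicLevel m τ n)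
    (ℓ : ℤ) (heq : ∀ i < ℓ, x i = y i) (hne : x ℓ ≠ y ℓ) :
    x (ℓ - 1) < k ∧
      ((x ℓ = x (ℓ - 1) ∧ y ℓ = x (ℓ - 1) + 1) ∨
        (x ℓ = x (ℓ - 1) + 1 ∧ y ℓ = x (ℓ - 1))) := by
  obtain ⟨p, t, hℓ, hpM, hz0, hzM⟩ := hP.exists_marker_window hn hx ℓ
  have hzy : factorWord y p (t + 1) = factorWord x p (t + 1) :=
    (factorWord_congr x fun i _ hi => heq i (by omega)).symm
  obtain ⟨a, ha, hxa⟩ := hP.exists_prefix_tau_append hn hx hpM hz0 hzM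
  obtain ⟨b, hb, hyb⟩ := hP.exists_prefix_tau_append hn hy (heq (p - 1) (by omega) ▸ hpM)
    (hzy ▸ hz0) (hzy ▸ hzM)
  rw [hℓ] at hxa
  rw [hzy, hℓ] at hyb
  obtain ⟨u, v, hvk, hzu, hv⟩ := hP.exists_eq_append_of_fork hk hn ha hb hxa hyb hne
  rw [factorWord_succ_right, show p + (t : ℤ) = ℓ - 1 by omega] at hzu
  obtain ⟨-, hxv⟩ := append_inj' hzu rfl
  exact singleton_inj.1 hxv ▸ ⟨hvk, hv⟩

end AsympSOE
end
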